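/- arXiv:1803.04672 — 6 statements merged into one kernel-verified Lean document; each statement's English description precedes it below -/
import Mathlib

section
/- Let X be a completely regular Hausdorff (Tychonoff) space and let G be an ideal of C_B(X). Then λ_{Ḡ}X = λ_G X, where Ḡ denotes the closure of G in C_B(X). -/
open BoundedContinuousFunction Set Filter Topology

section Preamble

variable {X : Type*} [TopologicalSpace X] {𝕜 : Type*} [RCLike 𝕜]

theorem betaExt_aux (f : X →ᵇ 𝕜) :
    Continuous (fun x => (⟨f x, by
      simpa [Metric.mem_closedBall, dist_zero_right] using f.norm_coe_le_norm x⟩ :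
        Metric.closedBall (0 : 𝕜) ‖f‖)) :=
  f.continuous.subtype_mk _

/-- `f_β`, the unique continuous extension of a bounded continuous function `f : X → 𝕜` to the
Stone–Čech compactification `βX`. -/
noncomputable def betaExt (f : X →ᵇ 𝕜) : StoneCech X → 𝕜 :=
  haveI : CompactSpace (Metric.closedBall (0 : 𝕜) ‖f‖) :=
    isCompact_iff_compactSpace.mp (isCompact_closedBall 0 ‖f‖)
  fun p => (stoneCechExtend (betaExt_aux f) p).1

theorem betaExt_unit (f : X →ᵇ 𝕜) (x : X) : betaExt f (stoneCechUnit x) = f x := by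
  haveI : CompactSpace (Metric.closedBall (0 : 𝕜) ‖f‖) :=
    isCompact_iff_compactSpace.mp (isCompact_closedBall 0 ‖f‖)
  exact congrArg Subtype.val (congrFun (stoneCechExtend_extends (betaExt_aux f)) x)

theorem continuous_betaExt (f : X →ᵇ 𝕜) : Continuous (betaExt f) := by
  haveI : CompactSpace (Metric.closedBall (0 : 𝕜) ‖f‖) :=
    isCompact_iff_compactSpace.mp (isCompact_closedBall 0 ‖f‖)
  exact continuous_subtype_val.comp (continuous_stoneCechExtend _)

/-- `λ_G X`, the union over `g ∈ G` of the cozero-sets in `βX` of the extensions `g_β`. -/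
def lambdaSet (G : Ideal (X →ᵇ 𝕜)) : Set (StoneCech X) :=
  ⋃ g ∈ G, {p | betaExt g p ≠ 0}

theorem norm_betaExt_le (f : X →ᵇ 𝕜) (p : StoneCech X) : ‖betaExt f p‖ ≤ ‖f‖ := by
  haveI : CompactSpace (Metric.closedBall (0 : 𝕜) ‖f‖) :=
    isCompact_iff_compactSpace.mp (isCompact_closedBall 0 ‖f‖)
  have h2 := mem_closedBall_zero_iff.mp (stoneCechExtend (betaExt_aux f) p).2
  exact h2

theorem betaExt_sub (f g : X →ᵇ 𝕜) (p : StoneCech X) :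
    betaExt (f - g) p = betaExt f p - betaExt g p := by
  have h : betaExt (f - g) = betaExt f - betaExt g := by
    apply Continuous.ext_on denseRange_stoneCechUnit (continuous_betaExt _)
      ((continuous_betaExt f).sub (continuous_betaExt g))
    rintro _ ⟨x, rfl⟩
    simp [betaExt_unit]
  simpa using congrFun h p

end Preamble

/-- For a Tychonoff space `X` and an ideal `G` of `C_B(X)`, `λ_{Ḡ}X = λ_G X` where `Ḡ` is
the closure of `G` in `C_B(X)`. -/
theorem lambdaSet_closure_eq {X : Type*} [TopologicalSpace X] [T35Space X]
    {𝕜 : Type*} [RCLike 𝕜] (G : Ideal (X →ᵇ 𝕜)) :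
    lambdaSet G.closure = lambdaSet G := by
  apply Set.Subset.antisymm
  · rintro p hp
    simp only [lambdaSet, Set.mem_iUnion, Set.mem_setOf_eq] at hp ⊢
    obtain ⟨g, hgG, hgp⟩ := hp
    have hg : g ∈ closure (G : Set (X →ᵇ 𝕜)) := hgG
    set c := ‖betaExt g p‖ with hc
    have hcpos : 0 < c := norm_pos_iff.mpr hgp
    obtain ⟨f, hfG, hf⟩ := Metric.mem_closure_iff.mp hg (c / 2) (by linarith)
    refine ⟨f, hfG, fun h0 => ?_⟩
    have : betaExt (g - f) p = betaExt g p := by rw [betaExt_sub, h0, sub_zero]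
    have hle : c ≤ ‖g - f‖ := by rw [hc, ← this]; exact norm_betaExt_le _ _
    have : ‖g - f‖ < c / 2 := by rwa [← dist_eq_norm]
    linarith
  · intro p hp
    simp only [lambdaSet, Set.mem_iUnion, Set.mem_setOf_eq] at hp ⊢
    obtain ⟨g, hgG, hgp⟩ := hp
    exact ⟨g, subset_closure hgG, hgp⟩
end

section
/- Let X be a completely regular Hausdorff (Tychonoff) space and let G₁ and G₂ be closed ideals of C_B(X) such that λ_{G₁}X = λ_{G₂}X. Then G₁ = G₂. -/
open BoundedContinuousFunction Set Filter Topology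

section Preamble

variable {X : Type*} [TopologicalSpace X] {𝕜 : Type*} [RCLike 𝕜]

section Iso

/-- `stoneCechUnit` as a continuous map. -/
def unitCM : C(X, StoneCech X) := ⟨stoneCechUnit, continuous_stoneCechUnit⟩

theorem betaExt_ext {f : X →ᵇ 𝕜} {F : C(StoneCech X, 𝕜)}
    (hfF : ∀ x : X, f x = F (stoneCechUnit x)) :
    ∀ p, betaExt f p = F p := by
  have := Continuous.ext_on denseRange_stoneCechUnit (continuous_betaExt f) F.continuous ?_
  · exact fun p => congrFun this p
  · rintro _ ⟨x, rfl⟩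
    rw [betaExt_unit]
    exact hfF x

/-- The extension map `f ↦ f_β` as a ring homomorphism `C_B(X) →+* C(βX, 𝕜)`. -/
noncomputable def betaHom : (X →ᵇ 𝕜) →+* C(StoneCech X, 𝕜) where
  toFun f := ⟨betaExt f, continuous_betaExt f⟩
  map_one' := by
    ext p
    exact betaExt_ext (F := (1 : C(StoneCech X, 𝕜))) (fun x => rfl) p
  map_mul' f g := by
    ext p
    exact betaExt_ext
      (F := (⟨betaExt f, continuous_betaExt f⟩ : C(StoneCech X, 𝕜)) *
        (⟨betaExt g, continuous_betaExt g⟩ : C(StoneCech X, 𝕜)))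
      (fun x => by
        simp only [ContinuousMap.mul_apply, ContinuousMap.coe_mk, betaExt_unit]
        rfl) p
  map_zero' := by
    ext p
    exact betaExt_ext (F := (0 : C(StoneCech X, 𝕜))) (fun x => rfl) p
  map_add' f g := by
    ext p
    exact betaExt_ext
      (F := (⟨betaExt f, continuous_betaExt f⟩ : C(StoneCech X, 𝕜)) +
        (⟨betaExt g, continuous_betaExt g⟩ : C(StoneCech X, 𝕜)))
      (fun x => by
        simp only [ContinuousMap.add_apply, ContinuousMap.coe_mk, betaExt_unit]
        rfl) p

/-- The restriction map `C(βX, 𝕜) → C_B(X)`, inverse to `betaHom`. -/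
noncomputable def betaInv (F : C(StoneCech X, 𝕜)) : X →ᵇ 𝕜 :=
  (mkOfCompact F).compContinuous unitCM

theorem betaInv_betaHom (f : X →ᵇ 𝕜) : betaInv (betaHom f) = f := by
  ext x
  exact betaExt_unit f x

theorem betaHom_betaInv (F : C(StoneCech X, 𝕜)) : betaHom (betaInv F) = F := by
  ext p
  exact betaExt_ext (F := F) (fun x => rfl) p

theorem betaHom_surjective : Function.Surjective (betaHom (X := X) (𝕜 := 𝕜)) :=
  fun F => ⟨betaInv F, betaHom_betaInv F⟩

theorem betaHom_injective : Function.Injective (betaHom (X := X) (𝕜 := 𝕜)) := by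
  intro f g hfg
  rw [← betaInv_betaHom f, hfg, betaInv_betaHom]

theorem continuous_betaInv : Continuous (betaInv (X := X) (𝕜 := 𝕜)) :=
  (continuous_compContinuous unitCM).comp
    (ContinuousMap.isometryEquivBoundedOfCompact (StoneCech X) 𝕜).continuous

theorem mem_map_betaHom {G : Ideal (X →ᵇ 𝕜)} {F : C(StoneCech X, 𝕜)} :
    F ∈ G.map (betaHom (X := X) (𝕜 := 𝕜)) ↔ betaInv F ∈ G := by
  rw [Ideal.mem_map_iff_of_surjective _ betaHom_surjective]
  constructor
  · rintro ⟨g, hg, rfl⟩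
    rwa [betaInv_betaHom]
  · intro hF
    exact ⟨betaInv F, hF, betaHom_betaInv F⟩

theorem setOfIdeal_map_betaHom (G : Ideal (X →ᵇ 𝕜)) :
    ContinuousMap.setOfIdeal (G.map (betaHom (X := X) (𝕜 := 𝕜))) = lambdaSet G := by
  ext p
  rw [ContinuousMap.mem_setOfIdeal]
  constructor
  · rintro ⟨F, hF, hFp⟩
    rw [mem_map_betaHom] at hF
    refine mem_iUnion₂.mpr ⟨betaInv F, hF, ?_⟩
    have := betaExt_ext (f := betaInv F) (F := F) (fun x => rfl) p
    simpa [this] using hFp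
  · intro hp
    obtain ⟨g, hg, hgp⟩ := mem_iUnion₂.mp hp
    exact ⟨betaHom g, Ideal.mem_map_of_mem _ hg, hgp⟩

theorem isClosed_map_betaHom {G : Ideal (X →ᵇ 𝕜)} (hG : IsClosed (G : Set (X →ᵇ 𝕜))) :
    IsClosed ((G.map (betaHom (X := X) (𝕜 := 𝕜)) : Ideal C(StoneCech X, 𝕜)) :
      Set C(StoneCech X, 𝕜)) := by
  have : ((G.map (betaHom (X := X) (𝕜 := 𝕜)) : Ideal C(StoneCech X, 𝕜)) :
      Set C(StoneCech X, 𝕜)) = betaInv ⁻¹' (G : Set (X →ᵇ 𝕜)) := by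
    ext F
    exact mem_map_betaHom
  rw [this]
  exact hG.preimage continuous_betaInv

end Iso

end Preamble

/-- For a Tychonoff space `X` and closed ideals `G₁`, `G₂` of `C_B(X)` with
`λ_{G₁}X = λ_{G₂}X`, one has `G₁ = G₂`. -/
theorem eq_of_lambdaSet_eq {X : Type*} [TopologicalSpace X] [T35Space X]
    {𝕜 : Type*} [RCLike 𝕜] {G₁ G₂ : Ideal (X →ᵇ 𝕜)}
    (h₁ : IsClosed (G₁ : Set (X →ᵇ 𝕜))) (h₂ : IsClosed (G₂ : Set (X →ᵇ 𝕜)))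
    (h : lambdaSet G₁ = lambdaSet G₂) :
    G₁ = G₂ := by
  have key : G₁.map (betaHom (X := X) (𝕜 := 𝕜)) = G₂.map (betaHom (X := X) (𝕜 := 𝕜)) := by
    rw [← ContinuousMap.idealOfSet_ofIdeal_isClosed (isClosed_map_betaHom h₁),
      ← ContinuousMap.idealOfSet_ofIdeal_isClosed (isClosed_map_betaHom h₂),
      setOfIdeal_map_betaHom, setOfIdeal_map_betaHom, h]
  ext g
  constructor
  · intro hg
    have : betaHom g ∈ G₂.map (betaHom (X := X) (𝕜 := 𝕜)) :=
      key ▸ Ideal.mem_map_of_mem _ hg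
    rw [mem_map_betaHom, betaInv_betaHom] at this
    exact this
  · intro hg
    have : betaHom g ∈ G₁.map (betaHom (X := X) (𝕜 := 𝕜)) :=
      key ▸ Ideal.mem_map_of_mem _ hg
    rw [mem_map_betaHom, betaInv_betaHom] at this
    exact this
end

section
/- Let X be a completely regular Hausdorff (Tychonoff) space and let {G_i : i ∈ I} be a collection of ideals of C_B(X). Then λ_{∑_{i∈I} G_i} X = ⋃_{i∈I} λ_{G_i} X, where ∑_{i∈I} G_i denotes the ideal generated by the union of the G_i (the sum of the ideals G_i). -/
open BoundedContinuousFunction Set Filter Topology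

/-! Since `f ↦ f_β` is a ring homomorphism, the functions whose extension vanishes at a point
`p ∈ βX` form an ideal, and `p ∉ λ_G X` says exactly that `G` lies in it. An ideal contains
`⨆ i, G i` iff it contains every `G i`. -/

section BetaExt

variable {X : Type*} [TopologicalSpace X] {𝕜 : Type*} [RCLike 𝕜]

theorem betaExt_eq_of_continuous {f : X →ᵇ 𝕜} {φ : StoneCech X → 𝕜} (hφ : Continuous φ)
    (hf : ∀ x, φ (stoneCechUnit x) = f x) : betaExt f = φ :=
  stoneCech_hom_ext (continuous_betaExt f) hφ <|
    funext fun x => (betaExt_unit f x).trans (hf x).symm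

theorem betaExt_zero : betaExt (0 : X →ᵇ 𝕜) = 0 :=
  betaExt_eq_of_continuous continuous_const fun _ => rfl

theorem betaExt_one : betaExt (1 : X →ᵇ 𝕜) = 1 :=
  betaExt_eq_of_continuous continuous_const fun _ => rfl

theorem betaExt_add (f g : X →ᵇ 𝕜) : betaExt (f + g) = betaExt f + betaExt g :=
  betaExt_eq_of_continuous ((continuous_betaExt f).add (continuous_betaExt g)) fun x => by
    simp [betaExt_unit]

theorem betaExt_mul (f g : X →ᵇ 𝕜) : betaExt (f * g) = betaExt f * betaExt g :=
  betaExt_eq_of_continuous ((continuous_betaExt f).mul (continuous_betaExt g)) fun x => by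
    simp [betaExt_unit]

noncomputable def betaEval (p : StoneCech X) : (X →ᵇ 𝕜) →+* 𝕜 where
  toFun f := betaExt f p
  map_zero' := congrFun betaExt_zero p
  map_one' := congrFun betaExt_one p
  map_add' f g := congrFun (betaExt_add f g) p
  map_mul' f g := congrFun (betaExt_mul f g) p

theorem notMem_lambdaSet_iff {G : Ideal (X →ᵇ 𝕜)} {p : StoneCech X} :
    p ∉ lambdaSet G ↔ G ≤ RingHom.ker (betaEval p) := by
  simp [lambdaSet, SetLike.le_def, RingHom.mem_ker, betaEval]

end BetaExt

theorem lambdaSet_iSup_general {X : Type*} [TopologicalSpace X]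
    {𝕜 : Type*} [RCLike 𝕜] {I : Type*} (G : I → Ideal (X →ᵇ 𝕜)) :
    lambdaSet (⨆ i, G i) = ⋃ i, lambdaSet (G i) := by
  ext p
  rw [← not_iff_not, notMem_lambdaSet_iff, iSup_le_iff, mem_iUnion, not_exists]
  simp only [notMem_lambdaSet_iff]

/-- For a Tychonoff space `X` and a family `{G_i : i ∈ I}` of ideals of `C_B(X)`,
`λ_{∑_{i∈I} G_i} X = ⋃_{i∈I} λ_{G_i} X`. -/
theorem lambdaSet_iSup {X : Type*} [TopologicalSpace X] [T35Space X]
    {𝕜 : Type*} [RCLike 𝕜] {I : Type*} (G : I → Ideal (X →ᵇ 𝕜)) :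
    lambdaSet (⨆ i, G i) = ⋃ i, lambdaSet (G i) :=
  lambdaSet_iSup_general G
end

section
/- Let X be a completely regular Hausdorff (Tychonoff) space, let f ∈ C_B(X), and let f₁, f₂, … be a sequence in C_B(X) such that |f|⁻¹([1/n, ∞)) ⊆ |f_n|⁻¹([1, ∞)) for every positive integer n. Then there is a sequence g₁, g₂, … in C_B(X) such that g_n f_n → f in the supremum norm. -/
/-!
Take `g_n = f · conj f_n / max (|f_n|², 1)`. Then `g_n f_n - f = f · (min (|f_n|², 1) - 1)`,
which vanishes where `|f_n| ≥ 1` and is bounded by `|f| < 1/n` elsewhere.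
-/

open BoundedContinuousFunction Set Filter Topology

lemma div_max_one_eq_min (t : ℝ) : t / max t 1 = min t 1 := by
  rcases le_total t 1 with h | h
  · rw [max_eq_right h, min_eq_left h, div_one]
  · rw [max_eq_left h, min_eq_right h, div_self (by linarith)]

lemma le_max_sq_one (t : ℝ) : t ≤ max (t ^ 2) 1 := by
  rcases le_total t 1 with h | h
  · exact h.trans (le_max_right _ _)
  · exact (le_self_pow₀ h two_ne_zero).trans (le_max_left _ _)

namespace BoundedContinuousFunction

variable {X : Type*} [TopologicalSpace X] {𝕜 : Type*} [RCLike 𝕜]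

noncomputable def truncInv (u : X →ᵇ 𝕜) : X →ᵇ 𝕜 :=
  ofNormedAddCommGroup (fun x => starRingEnd 𝕜 (u x) / (max (‖u x‖ ^ 2) 1 : ℝ))
    ((RCLike.continuous_conj.comp u.continuous).div
      (RCLike.continuous_ofReal.comp ((u.continuous.norm.pow 2).max continuous_const))
      fun _ => RCLike.ofReal_ne_zero.mpr (by positivity))
    1 fun x => by
      rw [norm_div, RCLike.norm_conj, RCLike.norm_ofReal, abs_of_pos (by positivity),
        div_le_one (by positivity)]
      exact le_max_sq_one ‖u x‖

lemma truncInv_mul_apply (u : X →ᵇ 𝕜) (x : X) :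
    (truncInv u * u) x = (min (‖u x‖ ^ 2) 1 : ℝ) := by
  simp only [truncInv, coe_mul, Pi.mul_apply, coe_ofNormedAddCommGroup]
  rw [div_mul_eq_mul_div, RCLike.conj_mul, ← RCLike.ofReal_pow, ← RCLike.ofReal_div,
    div_max_one_eq_min]

lemma dist_mul_truncInv_mul_le (f u : X →ᵇ 𝕜) {ε : ℝ} (hε : 0 ≤ ε)
    (h : {x | ε ≤ ‖f x‖} ⊆ {x | 1 ≤ ‖u x‖}) : dist (f * truncInv u * u) f ≤ ε := by
  refine (dist_le hε).mpr fun x => ?_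
  have hsub : (f * truncInv u * u) x - f x = f x * ((min (‖u x‖ ^ 2) 1 - 1 : ℝ) : 𝕜) := by
    rw [mul_assoc, coe_mul, Pi.mul_apply, truncInv_mul_apply]
    push_cast
    ring
  rw [dist_eq_norm, hsub, norm_mul, RCLike.norm_ofReal]
  rcases le_or_gt 1 ‖u x‖ with hu | hu
  · rw [min_eq_right (one_le_pow₀ hu), sub_self, abs_zero, mul_zero]
    exact hε
  · have hf : ‖f x‖ ≤ ε := le_of_lt (not_le.mp fun hf => hu.not_ge (h hf))
    have hmin : |min (‖u x‖ ^ 2) 1 - 1| ≤ 1 := by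
      rw [abs_of_nonpos (by linarith [min_le_right (‖u x‖ ^ 2) 1])]
      linarith [le_min (sq_nonneg ‖u x‖) zero_le_one]
    calc ‖f x‖ * |min (‖u x‖ ^ 2) 1 - 1| ≤ ε * 1 := by gcongr
      _ = ε := mul_one ε

end BoundedContinuousFunction

theorem exists_seq_mul_tendsto_general {X : Type*} [TopologicalSpace X]
    {𝕜 : Type*} [RCLike 𝕜] (f : X →ᵇ 𝕜) (fs : ℕ → (X →ᵇ 𝕜))
    (hfs : ∀ n : ℕ, {x : X | (1 : ℝ) / (n + 1) ≤ ‖f x‖} ⊆ {x : X | 1 ≤ ‖fs n x‖}) :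
    ∃ gs : ℕ → (X →ᵇ 𝕜), Tendsto (fun n => gs n * fs n) atTop (𝓝 f) := by
  refine ⟨fun n => f * truncInv (fs n), tendsto_iff_dist_tendsto_zero.mpr ?_⟩
  exact squeeze_zero (fun _ => dist_nonneg)
    (fun n => dist_mul_truncInv_mul_le f (fs n) (by positivity) (hfs n))
    tendsto_one_div_add_atTop_nhds_zero_nat

/-- Let `f ∈ C_B(X)` and let `f₁, f₂, …` (here `fs 0, fs 1, …`, with `fs n` playing the role
of `f_{n+1}`) be a sequence in `C_B(X)` such that `|f|⁻¹([1/n,∞)) ⊆ |f_n|⁻¹([1,∞))` for every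
positive integer `n`. Then `g_n f_n → f` (in supremum norm) for some sequence `g₁, g₂, …`
in `C_B(X)`. -/
theorem exists_seq_mul_tendsto {X : Type*} [TopologicalSpace X] [T35Space X]
    {𝕜 : Type*} [RCLike 𝕜] (f : X →ᵇ 𝕜) (fs : ℕ → (X →ᵇ 𝕜))
    (hfs : ∀ n : ℕ, {x : X | (1 : ℝ) / (n + 1) ≤ ‖f x‖} ⊆ {x : X | 1 ≤ ‖fs n x‖}) :
    ∃ gs : ℕ → (X →ᵇ 𝕜), Tendsto (fun n => gs n * fs n) atTop (𝓝 f) :=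
  exists_seq_mul_tendsto_general f fs hfs
end

section
/- Let X be a completely regular Hausdorff (Tychonoff) space and let G be a closed ideal of C_B(X). Then the following are equivalent: (1) the subspace λ_G X of βX is Lindelöf; (2) λ_G X is σ-compact; (3) G equals the closure in C_B(X) of the principal ideal ⟨g⟩ generated by some element g of G. -/
/-!
Everything rests on a description of the closure of a principal ideal: `f ∈ closure ⟨g⟩` iff
`coz f_β ⊆ coz g_β`. For the converse direction, compactness of `βX` gives `c > 0` with
`|g| ≥ c` wherever `|f| ≥ ε`, and then `f ḡ / max(|g|², c²)` times `g` is `ε`-close to `f`.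
Consequently `G = closure ⟨g⟩` iff `λ_G X = coz g_β`, which is σ-compact as a cozero-set in a
compact space. If `λ_G X` is Lindelöf, it is covered by countably many `coz (g_n)_β` with
`g_n ∈ G`, and `∑ 2⁻ⁿ g_n ḡ_n / (‖g_n‖² + 1)`, which lies in the closed ideal `G`, has a
cozero-set containing all of them.
-/

open BoundedContinuousFunction Set Filter Topology

open Function

section BetaExt

variable {X : Type*} [TopologicalSpace X] {𝕜 : Type*} [RCLike 𝕜]

theorem betaExt_mem_of_forall_mem {f g : X →ᵇ 𝕜} {S : Set (𝕜 × 𝕜)} (hS : IsClosed S)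
    (h : ∀ x, (f x, g x) ∈ S) (p : StoneCech X) : (betaExt f p, betaExt g p) ∈ S :=
  denseRange_stoneCechUnit.induction_on p
    (hS.preimage ((continuous_betaExt f).prodMk (continuous_betaExt g)))
    fun x => by simpa only [betaExt_unit] using h x

theorem lipschitzWith_betaExt_apply (p : StoneCech X) :
    LipschitzWith 1 fun f : X →ᵇ 𝕜 => betaExt f p :=
  LipschitzWith.of_dist_le_mul fun f g => by
    simpa using betaExt_mem_of_forall_mem (S := {z | dist z.1 z.2 ≤ dist f g})
      (isClosed_le continuous_dist continuous_const) (fun x => dist_coe_le_dist x) p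

theorem support_betaExt_subset_of_mul_norm_sq_le {f g : X →ᵇ 𝕜} {c : ℝ} (hc : 0 < c)
    (h : ∀ x, c * ‖f x‖ ^ 2 ≤ ‖g x‖) : support (betaExt f) ⊆ support (betaExt g) := by
  intro p hp hgp
  have := betaExt_mem_of_forall_mem (S := {z | c * ‖z.1‖ ^ 2 ≤ ‖z.2‖})
    (isClosed_le (by fun_prop) (by fun_prop)) h p
  simp only [mem_ofPred_eq, hgp, norm_zero] at this
  exact hp (by simpa using (mul_nonpos_iff_pos_imp_nonpos.1 this).1 hc)

theorem exists_forall_le_norm_of_support_betaExt_subset {f g : X →ᵇ 𝕜}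
    (h : support (betaExt f) ⊆ support (betaExt g)) {ε : ℝ} (hε : 0 < ε) :
    ∃ c > 0, ∀ x, ε ≤ ‖f x‖ → c ≤ ‖g x‖ := by
  have hK : IsCompact {p | ε ≤ ‖betaExt f p‖} :=
    (isClosed_le continuous_const (continuous_betaExt f).norm).isCompact
  obtain ⟨c, hc, hcK⟩ := hK.exists_forall_le' (continuous_betaExt g).norm.continuousOn
    (a := 0) fun p hp => norm_pos_iff.2 <| h fun hf0 => by
      simp only [mem_ofPred_eq, hf0, norm_zero] at hp; linarith
  refine ⟨c, hc, fun x hx => ?_⟩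
  simpa only [betaExt_unit] using
    hcK (stoneCechUnit x) (by simpa only [mem_ofPred_eq, betaExt_unit])

theorem exists_norm_sub_mul_le {f g : X →ᵇ 𝕜} {ε c : ℝ} (hε : 0 ≤ ε) (hc : 0 < c)
    (h : ∀ x, ε ≤ ‖f x‖ → c ≤ ‖g x‖) : ∃ a : X →ᵇ 𝕜, ‖f - a * g‖ ≤ ε := by
  set D : X → ℝ := fun x => max (‖g x‖ ^ 2) (c ^ 2)
  have hD : ∀ x, 0 < D x := fun x => lt_max_of_lt_right (by positivity)
  have hcont : Continuous fun x => ((D x)⁻¹ : 𝕜) * star (g x) * f x := by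
    refine .mul (.mul (.inv₀ (by fun_prop) fun x => ?_) (by fun_prop)) (by fun_prop)
    exact_mod_cast (hD x).ne'
  let a := ofNormedAddCommGroup _ hcont (‖g‖ * ‖f‖ / c ^ 2) fun x => by
    simp only [norm_mul, norm_inv, RCLike.norm_ofReal, abs_of_pos (hD x), norm_star]
    rw [inv_mul_eq_div, div_mul_eq_mul_div]
    gcongr
    exacts [g.norm_coe_le_norm x, f.norm_coe_le_norm x, le_max_right _ _]
  refine ⟨a, (norm_le hε).2 fun x => ?_⟩
  have key : (f - a * g) x = ((1 - ‖g x‖ ^ 2 / D x : ℝ) : 𝕜) * f x := by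
    have hsq : star (g x) * g x = ((‖g x‖ ^ 2 : ℝ) : 𝕜) := by
      simp [RCLike.star_def, RCLike.conj_mul]
    change f x - (D x : 𝕜)⁻¹ * star (g x) * f x * g x = _
    push_cast at hsq ⊢
    linear_combination (-(D x : 𝕜)⁻¹ * f x) * hsq
  rw [key, norm_mul, RCLike.norm_ofReal]
  rcases le_or_gt ε ‖f x‖ with hfx | hfx
  · have hDx : D x = ‖g x‖ ^ 2 := max_eq_left (pow_le_pow_left₀ hc.le (h x hfx) 2)
    rw [hDx, div_self (hDx ▸ hD x).ne', sub_self, abs_zero, zero_mul]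
    exact hε
  · have h0 : 0 ≤ ‖g x‖ ^ 2 / D x := div_nonneg (sq_nonneg _) (hD x).le
    have h1 : ‖g x‖ ^ 2 / D x ≤ 1 := div_le_one_of_le₀ (le_max_left _ _) (hD x).le
    rw [abs_of_nonneg (sub_nonneg.2 h1)]
    nlinarith [norm_nonneg (f x)]

theorem mem_closure_span_singleton_iff {f g : X →ᵇ 𝕜} :
    f ∈ closure ((Ideal.span {g} : Ideal (X →ᵇ 𝕜)) : Set (X →ᵇ 𝕜)) ↔
      support (betaExt f) ⊆ support (betaExt g) := by
  constructor
  · intro hf p hp hgp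
    have hclosed : IsClosed {u : X →ᵇ 𝕜 | betaExt u p = 0} :=
      isClosed_singleton.preimage (lipschitzWith_betaExt_apply p).continuous
    refine hp (closure_minimal (fun u hu => ?_) hclosed hf)
    obtain ⟨a, rfl⟩ := Ideal.mem_span_singleton'.1 hu
    have := betaExt_mem_of_forall_mem (f := a * g) (g := g)
      (S := {z | ‖z.1‖ ≤ ‖a‖ * ‖z.2‖}) (isClosed_le (by fun_prop) (by fun_prop))
      (fun x => by simpa only [coe_mul, Pi.mul_apply, mem_ofPred_eq, norm_mul] using
        mul_le_mul_of_nonneg_right (a.norm_coe_le_norm x) (norm_nonneg (g x))) p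
    simpa [hgp] using this
  · intro h
    refine Metric.mem_closure_iff.2 fun ε hε => ?_
    obtain ⟨c, hc, hfg⟩ := exists_forall_le_norm_of_support_betaExt_subset h (half_pos hε)
    obtain ⟨a, ha⟩ := exists_norm_sub_mul_le (half_pos hε).le hc hfg
    exact ⟨a * g, Ideal.mem_span_singleton'.2 ⟨a, rfl⟩, by rw [dist_eq_norm]; linarith⟩

theorem support_betaExt_subset_lambdaSet {G : Ideal (X →ᵇ 𝕜)} {g : X →ᵇ 𝕜} (hg : g ∈ G) :
    support (betaExt g) ⊆ lambdaSet G :=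
  subset_biUnion_of_mem (u := fun g => support (betaExt g)) hg

theorem coe_eq_closure_span_singleton_iff {G : Ideal (X →ᵇ 𝕜)}
    (hG : IsClosed (G : Set (X →ᵇ 𝕜))) {g : X →ᵇ 𝕜} (hg : g ∈ G) :
    (G : Set (X →ᵇ 𝕜)) = closure ((Ideal.span {g} : Ideal (X →ᵇ 𝕜)) : Set (X →ᵇ 𝕜)) ↔
      lambdaSet G ⊆ support (betaExt g) := by
  simp only [lambdaSet, iUnion₂_subset_iff]
  refine ⟨fun h f hf => mem_closure_span_singleton_iff.1 (h ▸ hf), fun h => ?_⟩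
  refine Subset.antisymm (fun f hf => mem_closure_span_singleton_iff.2 (h f hf)) ?_
  exact closure_minimal (Ideal.span_le.2 (singleton_subset_iff.2 hg)) hG

theorem exists_mem_forall_mul_norm_sq_le {G : Ideal (X →ᵇ 𝕜)}
    (hG : IsClosed (G : Set (X →ᵇ 𝕜))) {h : ℕ → X →ᵇ 𝕜} (hh : ∀ n, h n ∈ G) :
    ∃ g ∈ G, ∃ c : ℕ → ℝ, (∀ n, 0 < c n) ∧ ∀ n x, c n * ‖h n x‖ ^ 2 ≤ ‖g x‖ := by
  set c : ℕ → ℝ := fun n => (1 / 2) ^ n / (‖h n‖ ^ 2 + 1)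
  have hc : ∀ n, 0 < c n := fun n => by positivity
  have hc_le : ∀ n x, c n * ‖h n x‖ ^ 2 ≤ (1 / 2) ^ n := fun n x =>
    calc c n * ‖h n x‖ ^ 2 ≤ c n * (‖h n‖ ^ 2 + 1) := by
          gcongr
          nlinarith [(h n).norm_coe_le_norm x, norm_nonneg (h n x)]
      _ = (1 / 2) ^ n := div_mul_cancel₀ _ (by positivity)
  set u : ℕ → X →ᵇ 𝕜 := fun n => (c n : 𝕜) • (star (h n) * h n)
  have hu_apply : ∀ n x, u n x = ((c n * ‖h n x‖ ^ 2 : ℝ) : 𝕜) := fun n x => by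
    simp [u, RCLike.star_def, RCLike.conj_mul, RCLike.real_smul_eq_coe_mul]
  have hu_norm : ∀ n, ‖u n‖ ≤ (1 / 2) ^ n := fun n =>
    (norm_le (by positivity)).2 fun x => by
      rw [hu_apply, RCLike.norm_ofReal, abs_of_nonneg (by positivity)]
      exact hc_le n x
  have hu : Summable u := .of_norm_bounded summable_geometric_two hu_norm
  refine ⟨∑' n, u n, tsum_mem hG fun n => G.smul_of_tower_mem _ (G.mul_mem_left _ (hh n)),
    c, hc, fun n x => ?_⟩
  have hsum : Summable fun m => c m * ‖h m x‖ ^ 2 :=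
    .of_nonneg_of_le (fun m => by positivity) (fun m => hc_le m x) summable_geometric_two
  have hg_apply : (∑' m, u m) x = ((∑' m, c m * ‖h m x‖ ^ 2 : ℝ) : 𝕜) := by
    change evalCLM 𝕜 x (∑' m, u m) = _
    rw [(evalCLM 𝕜 x).map_tsum hu, RCLike.ofReal_tsum]
    simp [hu_apply]
  rw [hg_apply, RCLike.norm_ofReal, abs_of_nonneg (tsum_nonneg fun m => by positivity)]
  exact hsum.le_tsum n fun m _ => by positivity

theorem exists_mem_iUnion_support_betaExt_subset {G : Ideal (X →ᵇ 𝕜)}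
    (hG : IsClosed (G : Set (X →ᵇ 𝕜))) {h : ℕ → X →ᵇ 𝕜} (hh : ∀ n, h n ∈ G) :
    ∃ g ∈ G, ⋃ n, support (betaExt (h n)) ⊆ support (betaExt g) := by
  obtain ⟨g, hg, c, hc, hle⟩ := exists_mem_forall_mul_norm_sq_le hG hh
  exact ⟨g, hg, iUnion_subset fun n => support_betaExt_subset_of_mul_norm_sq_le (hc n) (hle n)⟩

theorem exists_seq_lambdaSet_subset_iUnion_support (G : Ideal (X →ᵇ 𝕜))
    [LindelofSpace (lambdaSet G)] :
    ∃ h : ℕ → X →ᵇ 𝕜, (∀ n, h n ∈ G) ∧ lambdaSet G ⊆ ⋃ n, support (betaExt (h n)) := by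
  obtain ⟨k, hk⟩ := (IsLindelof.of_coe (s := lambdaSet G)).indexed_countable_subcover
    (fun g : G => support (betaExt (g : X →ᵇ 𝕜)))
    (fun g => (continuous_betaExt _).isOpen_support)
    (iUnion₂_subset fun g hg => subset_iUnion_of_subset ⟨g, hg⟩ subset_rfl)
  exact ⟨fun n => k n, fun n => (k n).2, hk⟩

end BetaExt

theorem isSigmaCompact_support {Y E : Type*} [TopologicalSpace Y] [CompactSpace Y]
    [NormedAddCommGroup E] {F : Y → E} (hF : Continuous F) : IsSigmaCompact (support F) := by
  refine ⟨fun n => {p | 1 / (n + 1 : ℝ) ≤ ‖F p‖},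
    fun n => (isClosed_le continuous_const hF.norm).isCompact, ?_⟩
  ext p
  simp only [mem_iUnion, mem_ofPred_eq, mem_support]
  refine ⟨fun ⟨n, hn⟩ hp => ?_, fun hp => ?_⟩
  · rw [hp, norm_zero] at hn
    exact (Nat.one_div_pos_of_nat.trans_le hn).false
  · obtain ⟨n, hn⟩ := exists_nat_one_div_lt (norm_pos_iff.2 hp)
    exact ⟨n, hn.le⟩

theorem lindelof_tfae_general {X : Type*} [TopologicalSpace X]
    {𝕜 : Type*} [RCLike 𝕜] (G : Ideal (X →ᵇ 𝕜))
    (hcl : IsClosed (G : Set (X →ᵇ 𝕜))) :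
    List.TFAE
      [LindelofSpace (lambdaSet G),
       SigmaCompactSpace (lambdaSet G),
       ∃ g ∈ G, (G : Set (X →ᵇ 𝕜)) =
         closure ((Ideal.span {g} : Ideal (X →ᵇ 𝕜)) : Set (X →ᵇ 𝕜))] := by
  tfae_have 2 → 1 := fun _ => inferInstance
  tfae_have 1 → 3 := by
    intro _
    obtain ⟨h, hhG, hcover⟩ := exists_seq_lambdaSet_subset_iUnion_support G
    obtain ⟨g, hg, hsub⟩ := exists_mem_iUnion_support_betaExt_subset hcl hhG
    exact ⟨g, hg, (coe_eq_closure_span_singleton_iff hcl hg).2 (hcover.trans hsub)⟩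
  tfae_have 3 → 2 := by
    rintro ⟨g, hg, hG⟩
    have hlambda : lambdaSet G = support (betaExt g) :=
      ((coe_eq_closure_span_singleton_iff hcl hg).1 hG).antisymm
        (support_betaExt_subset_lambdaSet hg)
    rw [← isSigmaCompact_iff_sigmaCompactSpace, hlambda]
    exact isSigmaCompact_support (continuous_betaExt g)
  tfae_finish

/-- For a Tychonoff space `X` and a closed ideal `G` of `C_B(X)`, the following are
equivalent: (1) `λ_G X` is Lindelöf; (2) `λ_G X` is σ-compact; (3) `G` is the closure in
`C_B(X)` of a principal ideal `⟨g⟩` for some `g ∈ G`. -/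
theorem lindelof_tfae {X : Type*} [TopologicalSpace X] [T35Space X]
    {𝕜 : Type*} [RCLike 𝕜] (G : Ideal (X →ᵇ 𝕜))
    (hcl : IsClosed (G : Set (X →ᵇ 𝕜))) :
    List.TFAE
      [LindelofSpace (lambdaSet G),
       SigmaCompactSpace (lambdaSet G),
       ∃ g ∈ G, (G : Set (X →ᵇ 𝕜)) =
         closure ((Ideal.span {g} : Ideal (X →ᵇ 𝕜)) : Set (X →ᵇ 𝕜))] :=
  lindelof_tfae_general G hcl
end

section
/- Let X be a completely regular Hausdorff (Tychonoff) space and let G₁ and G₂ be closed ideals of C_B(X). If λ_{G₁}X ⊆ λ_{G₂}X, then G₁ ⊆ G₂. -/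
open BoundedContinuousFunction Set Filter Topology

/-- For a Tychonoff space `X` and closed ideals `G₁`, `G₂` of `C_B(X)`: if
`λ_{G₁}X ⊆ λ_{G₂}X` then `G₁ ⊆ G₂`. -/
theorem le_of_lambdaSet_subset {X : Type*} [TopologicalSpace X] [T35Space X]
    {𝕜 : Type*} [RCLike 𝕜] {G₁ G₂ : Ideal (X →ᵇ 𝕜)}
    (h₁ : IsClosed (G₁ : Set (X →ᵇ 𝕜))) (h₂ : IsClosed (G₂ : Set (X →ᵇ 𝕜)))
    (h : lambdaSet G₁ ⊆ lambdaSet G₂) :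
    G₁ ≤ G₂ := by
  intro f hf
  have key : ∀ ε : ℝ, 0 < ε → ∃ g ∈ G₂, dist f g ≤ ε := by
    intro ε hε
    set K : Set (StoneCech X) := {p | ε ≤ ‖betaExt f p‖} with hK
    have hKc : IsCompact K :=
      (isClosed_le continuous_const (continuous_betaExt f).norm).isCompact
    have hKsub : ∀ p ∈ K, p ∈ lambdaSet G₂ := by
      intro p hp
      apply h
      refine Set.mem_biUnion hf ?_
      intro h0
      rw [Set.mem_setOf_eq, h0] at hp
      simp at hp
      linarith
    obtain ⟨t, ht⟩ := hKc.elim_finite_subcover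
        (fun g : G₂ => {p | betaExt (g : X →ᵇ 𝕜) p ≠ 0})
        (fun g => isOpen_compl_singleton.preimage (continuous_betaExt _))
        (by
          intro p hp
          obtain ⟨S, ⟨g, rfl⟩, hS⟩ := hKsub p hp
          obtain ⟨hg, hgp⟩ := by simpa using hS
          exact Set.mem_iUnion.mpr ⟨⟨g, hg⟩, hgp⟩)
    by_cases hne : K.Nonempty
    · -- main case
      set hβ : StoneCech X → ℝ := fun p => ∑ i ∈ t, ‖betaExt (i : X →ᵇ 𝕜) p‖ ^ 2 with hhβ
      have hβcont : Continuous hβ :=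
        continuous_finset_sum _ fun i _ => (continuous_betaExt _).norm.pow 2
      obtain ⟨p₀, hp₀K, hp₀min⟩ := hKc.exists_isMinOn hne hβcont.continuousOn
      set c := hβ p₀ with hc
      have hcpos : 0 < c := by
        obtain ⟨i, hit, hi⟩ : ∃ i ∈ t, betaExt (i : X →ᵇ 𝕜) p₀ ≠ 0 := by
          have := ht hp₀K
          simpa using this
        exact Finset.sum_pos' (fun j _ => by positivity) ⟨i, hit, pow_pos (norm_pos_iff.mpr hi) 2⟩
      have hfpos : (0:ℝ) < ‖f‖ + 1 := by positivity
      set δ := c * ε / (‖f‖ + 1) with hδ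
      have hδpos : 0 < δ := by positivity
      clear_value δ
      set h' : X → ℝ := fun x => ∑ i ∈ t, ‖(i : X →ᵇ 𝕜) x‖ ^ 2 with hh'
      have h'eq : ∀ x, h' x = hβ (stoneCechUnit x) := by
        intro x; simp [hh', hhβ, betaExt_unit]
      have h'nonneg : ∀ x, 0 ≤ h' x := fun x =>
        Finset.sum_nonneg fun i _ => by positivity
      have h'cont : Continuous h' :=
        continuous_finset_sum _ fun i _ => (i : X →ᵇ 𝕜).continuous.norm.pow 2
      have hden : ∀ x, (0:ℝ) < h' x + δ := fun x => by
        have := h'nonneg x; linarith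
      have wcont : Continuous fun x => (((h' x + δ)⁻¹ : ℝ) : 𝕜) :=
        RCLike.continuous_ofReal.comp
          ((h'cont.add continuous_const).inv₀ fun x => (hden x).ne')
      set w : X →ᵇ 𝕜 := BoundedContinuousFunction.ofNormedAddCommGroup _ wcont δ⁻¹
        (fun x => by
          rw [RCLike.norm_ofReal, abs_of_nonneg (le_of_lt (inv_pos.mpr (hden x)))]
          exact inv_anti₀ hδpos (by have := h'nonneg x; linarith)) with hw
      set hs : X →ᵇ 𝕜 := ∑ i ∈ t, star (i : X →ᵇ 𝕜) * (i : X →ᵇ 𝕜) with hhs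
      have hsmem : hs ∈ G₂ := Ideal.sum_mem _ fun i _ => Ideal.mul_mem_left _ _ i.2
      have hsx : ∀ x, hs x = ((h' x : ℝ) : 𝕜) := by
        intro x
        rw [hhs, hh']
        push_cast
        rw [BoundedContinuousFunction.coe_sum, Finset.sum_apply]
        refine Finset.sum_congr rfl fun i _ => ?_
        simp [RCLike.conj_mul]
      refine ⟨f * w * hs, Ideal.mul_mem_left _ _ hsmem, ?_⟩
      rw [dist_eq_norm]
      refine (BoundedContinuousFunction.norm_le hε.le).mpr fun x => ?_
      have hval : (f - f * w * hs) x = f x * ((δ / (h' x + δ) : ℝ) : 𝕜) := by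
        simp only [BoundedContinuousFunction.coe_sub, Pi.sub_apply,
          BoundedContinuousFunction.coe_mul, Pi.mul_apply, hsx x]
        rw [hw]
        simp only [BoundedContinuousFunction.coe_ofNormedAddCommGroup]
        have hne' : ((h' x : ℝ) : 𝕜) + ((δ : ℝ) : 𝕜) ≠ 0 := by
          rw [← RCLike.ofReal_add, ne_eq, RCLike.ofReal_eq_zero]
          exact (hden x).ne'
        push_cast
        field_simp
        ring
      rw [hval, norm_mul, RCLike.norm_ofReal,
        abs_of_nonneg (div_nonneg hδpos.le (hden x).le)]
      by_cases hx : ε ≤ ‖f x‖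
      · have hxK : stoneCechUnit x ∈ K := by
          rw [hK, Set.mem_setOf_eq, betaExt_unit]; exact hx
        have hac : c ≤ h' x := by rw [h'eq]; exact hp₀min hxK
        have hb1 : δ / (h' x + δ) ≤ δ / c := by
          apply div_le_div_of_nonneg_left hδpos.le hcpos
          linarith
        have hdc : δ / c = ε / (‖f‖ + 1) := by
          rw [hδ]; field_simp
        calc ‖f x‖ * (δ / (h' x + δ)) ≤ ‖f‖ * (δ / c) :=
              mul_le_mul (f.norm_coe_le_norm x) hb1
                (div_nonneg hδpos.le (hden x).le) (norm_nonneg f)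
          _ = ‖f‖ * (ε / (‖f‖ + 1)) := by rw [hdc]
          _ ≤ ε := by
              rw [mul_div_assoc']
              rw [div_le_iff₀ hfpos]
              nlinarith [norm_nonneg f]
      · push_neg at hx
        have h1 : δ / (h' x + δ) ≤ 1 :=
          div_le_one_of_le₀ (by have := h'nonneg x; linarith) (hden x).le
        nlinarith [norm_nonneg (f x), div_nonneg hδpos.le (hden x).le]
    · -- K empty
      refine ⟨0, G₂.zero_mem, ?_⟩
      rw [Set.not_nonempty_iff_eq_empty] at hne
      rw [dist_zero_right]
      refine (BoundedContinuousFunction.norm_le hε.le).mpr fun x => ?_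
      by_contra hx
      push_neg at hx
      have : stoneCechUnit x ∈ K := by
        rw [hK, Set.mem_setOf_eq, betaExt_unit]; linarith
      rw [hne] at this
      exact this
  have : f ∈ closure (G₂ : Set (X →ᵇ 𝕜)) := by
    rw [Metric.mem_closure_iff]
    intro ε hε
    obtain ⟨g, hg, hd⟩ := key (ε / 2) (by linarith)
    exact ⟨g, hg, lt_of_le_of_lt hd (by linarith)⟩
  rwa [h₂.closure_eq] at this
end
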